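/- Typability from DF to DF2 (1CPS to 2CPS for shift/reset): if Γ ⊢_DF e : τ, α, β in Danvy–Filinski's 1CPS type system, then for any DF2 type γ, the translated environment ⌈Γ⌉_γ satisfies ⌈Γ⌉_γ ⊢_DF2 e : ⌈τ⌉_γ ⟨⌈α⌉_γ → γ⟩ γ ⟨⌈β⌉_γ → γ⟩ γ in the 2CPS type system. -/
import Mathlib


namespace DF12

/- Source language: λ-calculus with numbers and shift/reset. -/
inductive Tm : Type
  | var : ℕ → Tm
  | num : ℕ → Tm
  | lam : Tm → Tm
  | app : Tm → Tm → Tm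
  | shift : Tm → Tm
  | reset : Tm → Tm

/- Danvy–Filinski (1CPS) types: nat, or (τ1 → τ2, α, β). -/
inductive DTy : Type
  | nat : DTy
  | arr : DTy → DTy → DTy → DTy → DTy

/-- Danvy–Filinski's type system: Γ ⊢ e : τ, α, β. -/
inductive DHasTy : List DTy → Tm → DTy → DTy → DTy → Prop
  | var {Γ : List DTy} {x : ℕ} {τ α : DTy} : Γ[x]? = some τ → DHasTy Γ (.var x) τ α α
  | num {Γ : List DTy} {n : ℕ} {α : DTy} : DHasTy Γ (.num n) .nat α α
  | lam {Γ : List DTy} {e : Tm} {τ1 τ2 α β γ : DTy} :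
      DHasTy (τ1 :: Γ) e τ2 α β → DHasTy Γ (.lam e) (.arr τ1 τ2 α β) γ γ
  | app {Γ : List DTy} {e1 e2 : Tm} {τ1 τ2 α β γ δ : DTy} :
      DHasTy Γ e1 (.arr τ1 τ2 α β) γ δ → DHasTy Γ e2 τ1 β γ →
      DHasTy Γ (.app e1 e2) τ2 α δ
  | shift {Γ : List DTy} {e : Tm} {τ α δ ς β : DTy} :
      DHasTy ((.arr τ α δ δ) :: Γ) e ς ς β → DHasTy Γ (.shift e) τ α β
  | reset {Γ : List DTy} {e : Tm} {ς τ α : DTy} :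
      DHasTy Γ e ς ς τ → DHasTy Γ (.reset e) τ α α

/- DF2 (2CPS) types: nat, or (τ1 → τ2) ⟨σα⟩ α ⟨σβ⟩ β, with functional
   meta-continuation types. -/
mutual
inductive D2Ty : Type
  | nat : D2Ty
  | arr : D2Ty → D2Ty → M2 → D2Ty → M2 → D2Ty → D2Ty
inductive M2 : Type
  | empty : M2
  | fn : D2Ty → D2Ty → M2
end

/-- The DF2 type system derived from the 2CPS interpreter:
    Γ ⊢ e : τ ⟨σα⟩ α ⟨σβ⟩ β. -/
inductive D2HasTy : List D2Ty → Tm → D2Ty → M2 → D2Ty → M2 → D2Ty → Prop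
  | var {Γ : List D2Ty} {x : ℕ} {τ : D2Ty} {σ : M2} {α : D2Ty} :
      Γ[x]? = some τ → D2HasTy Γ (.var x) τ σ α σ α
  | num {Γ : List D2Ty} {n : ℕ} {σ : M2} {α : D2Ty} : D2HasTy Γ (.num n) .nat σ α σ α
  | lam {Γ : List D2Ty} {e : Tm} {τ1 τ2 : D2Ty} {σα : M2} {a : D2Ty} {σβ : M2} {b : D2Ty}
      {σ : M2} {γ : D2Ty} :
      D2HasTy (τ1 :: Γ) e τ2 σα a σβ b →
      D2HasTy Γ (.lam e) (.arr τ1 τ2 σα a σβ b) σ γ σ γ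
  | app {Γ : List D2Ty} {e1 e2 : Tm} {τ1 τ2 : D2Ty} {σα : M2} {a : D2Ty} {σβ : M2} {b : D2Ty}
      {σγ : M2} {γ : D2Ty} {σδ : M2} {δ : D2Ty} :
      D2HasTy Γ e1 (.arr τ1 τ2 σα a σβ b) σγ γ σδ δ →
      D2HasTy Γ e2 τ1 σβ b σγ γ →
      D2HasTy Γ (.app e1 e2) τ2 σα a σδ δ
  | reset {Γ : List D2Ty} {e : Tm} {γ γ' τ : D2Ty} {σ : M2} {α β : D2Ty} :
      D2HasTy Γ e γ (.fn γ γ') γ' (.fn τ α) β →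
      D2HasTy Γ (.reset e) τ σ α σ β
  | shift {Γ : List D2Ty} {e : Tm} {τ τ1 : D2Ty} {σ1 : M2} {τ2 α γ γ' : D2Ty} {σβ : M2}
      {β : D2Ty} :
      D2HasTy ((.arr τ τ1 σ1 τ2 σ1 α) :: Γ) e γ (.fn γ γ') γ' σβ β →
      D2HasTy Γ (.shift e) τ (.fn τ1 τ2) α σβ β

/-- The type-level translation ⌈·⌉_γ from DF types to DF2 types, fixing
    every meta-continuation answer type to γ. -/
def upTy (γ : D2Ty) : DTy → D2Ty
  | .nat => .nat
  | .arr t1 t2 a b =>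
      .arr (upTy γ t1) (upTy γ t2) (.fn (upTy γ a) γ) γ (.fn (upTy γ b) γ) γ

/-- Typability from DF to DF2: if Γ ⊢_DF e : τ, α, β, then for any DF2 type γ,
    ⌈Γ⌉_γ ⊢_DF2 e : ⌈τ⌉_γ ⟨⌈α⌉_γ → γ⟩ γ ⟨⌈β⌉_γ → γ⟩ γ. -/
theorem df_to_df2 {Γ : List DTy} {e : Tm} {τ α β : DTy}
    (h : DHasTy Γ e τ α β) (γ : D2Ty) :
    D2HasTy (Γ.map (upTy γ)) e (upTy γ τ) (.fn (upTy γ α) γ) γ (.fn (upTy γ β) γ) γ := by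
  induction h with
  | var hx => exact .var (by simp [List.getElem?_map, hx])
  | num => exact .num
  | lam _ ih => exact .lam ih
  | app _ _ ih1 ih2 => exact .app ih1 ih2
  | shift _ ih => exact .shift ih
  | reset _ ih => exact .reset ih

end DF12
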